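/- Let μ be a measure on a measurable space α, let φ : α → ℝ and h : α → ℝ be measurable with h ≥ 0. Let I ⊆ ℝ be an open interval and λ ∈ I. Assume that for every t ∈ I the function z ↦ h(z)·exp(t·φ(z)) is μ-integrable and Z(t) := ∫ h(z)·exp(t·φ(z)) dμ(z) > 0. Define the expectation parameter m(t) := (∫ φ(z)·h(z)·exp(t·φ(z)) dμ(z)) / Z(t). Then m is differentiable at λ and m′(λ) = (∫ φ(z)²·h(z)·exp(λ·φ(z)) dμ(z)) / Z(λ) − m(λ)², i.e., the derivative of the expectation parameter equals the variance of φ under the tilted probability distribution with parameter λ. -/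

import Mathlib

open MeasureTheory Real

private lemma aux_exp_endpoints {c d s x : ℝ} (h1 : c ≤ s) (h2 : s ≤ d) :
    Real.exp (s * x) ≤ Real.exp (c * x) + Real.exp (d * x) := by
  rcases le_or_gt 0 x with hx | hx
  · have : s * x ≤ d * x := mul_le_mul_of_nonneg_right h2 hx
    have := Real.exp_le_exp.2 this
    have := (Real.exp_pos (c * x)).le
    linarith
  · have hcs : s * x ≤ c * x := mul_le_mul_of_nonpos_right h1 hx.le
    have := Real.exp_le_exp.2 hcs
    have := (Real.exp_pos (d * x)).le
    linarith

private lemma aux_abs_mul_exp {δ : ℝ} (hδ : 0 < δ) (t x : ℝ) :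
    |x| * Real.exp (t * x) ≤ δ⁻¹ * (Real.exp ((t + δ) * x) + Real.exp ((t - δ) * x)) := by
  have habs : δ * |x| ≤ Real.exp (δ * x) + Real.exp (-(δ * x)) := by
    have h1 : δ * |x| = |δ * x| := by rw [abs_mul, abs_of_pos hδ]
    have h2 : |δ * x| ≤ Real.exp |δ * x| := by
      have := Real.add_one_le_exp |δ * x|; linarith
    rcases le_or_gt 0 (δ * x) with hx | hx
    · rw [h1, abs_of_nonneg hx] at *
      have := (Real.exp_pos (-(δ * x))).le; linarith
    · rw [h1, abs_of_neg hx] at *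
      have := (Real.exp_pos (δ * x)).le; linarith
  have he := (Real.exp_pos (t * x)).le
  have key : (δ * |x|) * Real.exp (t * x) ≤
      (Real.exp (δ * x) + Real.exp (-(δ * x))) * Real.exp (t * x) :=
    mul_le_mul_of_nonneg_right habs he
  have heq : (Real.exp (δ * x) + Real.exp (-(δ * x))) * Real.exp (t * x)
      = Real.exp ((t + δ) * x) + Real.exp ((t - δ) * x) := by
    rw [add_mul, ← Real.exp_add, ← Real.exp_add]; ring_nf
  rw [heq] at key
  calc |x| * Real.exp (t * x) = δ⁻¹ * (δ * |x| * Real.exp (t * x)) := by field_simp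
    _ ≤ δ⁻¹ * (Real.exp ((t + δ) * x) + Real.exp ((t - δ) * x)) :=
        mul_le_mul_of_nonneg_left key (by positivity)

private lemma aux_sq_mul_exp {δ : ℝ} (hδ : 0 < δ) (t x : ℝ) :
    x ^ 2 * Real.exp (t * x) ≤
      (4 / δ ^ 2) * (Real.exp ((t + δ) * x) + Real.exp ((t - δ) * x)) := by
  have hsq : (δ * x) ^ 2 ≤ 4 * (Real.exp (δ * x) + Real.exp (-(δ * x))) := by
    have key : ∀ y : ℝ, 0 ≤ y → y ^ 2 ≤ 4 * Real.exp y := by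
      intro y hy
      have h1 : y / 2 + 1 ≤ Real.exp (y / 2) := Real.add_one_le_exp _
      have h2 : Real.exp (y / 2) * Real.exp (y / 2) = Real.exp y := by
        rw [← Real.exp_add]; ring_nf
      nlinarith [Real.exp_pos (y / 2)]
    rcases le_or_gt 0 (δ * x) with hx | hx
    · have := key (δ * x) hx
      have := (Real.exp_pos (-(δ * x))).le; nlinarith
    · have := key (-(δ * x)) (by linarith)
      have := (Real.exp_pos (δ * x)).le; nlinarith
  have he := (Real.exp_pos (t * x)).le
  have key : ((δ * x) ^ 2) * Real.exp (t * x) ≤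
      (4 * (Real.exp (δ * x) + Real.exp (-(δ * x)))) * Real.exp (t * x) :=
    mul_le_mul_of_nonneg_right hsq he
  have heq : (Real.exp (δ * x) + Real.exp (-(δ * x))) * Real.exp (t * x)
      = Real.exp ((t + δ) * x) + Real.exp ((t - δ) * x) := by
    rw [add_mul, ← Real.exp_add, ← Real.exp_add]; ring_nf
  have hδ2 : (0:ℝ) < δ ^ 2 := by positivity
  rw [mul_pow] at key
  have : x ^ 2 * Real.exp (t * x) = (δ ^ 2 * x ^ 2 * Real.exp (t * x)) / δ ^ 2 := by
    field_simp
  rw [this, div_le_iff₀ hδ2]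
  calc δ ^ 2 * x ^ 2 * Real.exp (t * x)
      ≤ 4 * (Real.exp (δ * x) + Real.exp (-(δ * x))) * Real.exp (t * x) := key
    _ = 4 * (Real.exp ((t + δ) * x) + Real.exp ((t - δ) * x)) := by rw [mul_assoc, heq]
    _ = 4 / δ ^ 2 * (Real.exp ((t + δ) * x) + Real.exp ((t - δ) * x)) * δ ^ 2 := by
        field_simp

/-- The derivative of the expectation parameter of a one-parameter exponential family
at an interior natural parameter equals the variance of the sufficient statistic under
the tilted distribution (Fisher information = gradient of expectation parameter). -/
theorem stmt_8 {α : Type*} [MeasurableSpace α] (μ : Measure α)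
    (φ h : α → ℝ) (hφ : Measurable φ) (hh : Measurable h) (hpos : ∀ z, 0 ≤ h z)
    (a b lam : ℝ) (hlam : lam ∈ Set.Ioo a b)
    (hint : ∀ t ∈ Set.Ioo a b, Integrable (fun z => h z * Real.exp (t * φ z)) μ)
    (hZ : ∀ t ∈ Set.Ioo a b, 0 < ∫ z, h z * Real.exp (t * φ z) ∂μ)
    (m : ℝ → ℝ)
    (hm : ∀ t, m t = (∫ z, φ z * h z * Real.exp (t * φ z) ∂μ) /
      (∫ z, h z * Real.exp (t * φ z) ∂μ)) :
    HasDerivAt m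
      ((∫ z, (φ z) ^ 2 * h z * Real.exp (lam * φ z) ∂μ) /
          (∫ z, h z * Real.exp (lam * φ z) ∂μ) - (m lam) ^ 2) lam := by
  obtain ⟨ha, hb⟩ := hlam
  set δ : ℝ := min (lam - a) (b - lam) / 3 with hδdef
  have hδ : 0 < δ := by
    have h1 : 0 < lam - a := by linarith
    have h2 : 0 < b - lam := by linarith
    have := lt_min h1 h2
    positivity
  have h2δa : 2 * δ < lam - a := by
    have := min_le_left (lam - a) (b - lam); linarith
  have h2δb : 2 * δ < b - lam := by
    have := min_le_right (lam - a) (b - lam); linarith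
  set c : ℝ := lam - 2 * δ with hcdef
  set d : ℝ := lam + 2 * δ with hddef
  have hc : c ∈ Set.Ioo a b := ⟨by simp only [hcdef]; linarith, by simp only [hcdef]; linarith⟩
  have hd : d ∈ Set.Ioo a b := ⟨by simp only [hddef]; linarith, by simp only [hddef]; linarith⟩
  -- base measurability facts
  have hmeas : ∀ t : ℝ, Measurable (fun z => h z * Real.exp (t * φ z)) := fun t =>
    hh.mul ((measurable_const.mul hφ).exp)
  have hmeas1 : ∀ t : ℝ, Measurable (fun z => φ z * h z * Real.exp (t * φ z)) := fun t =>
    (hφ.mul hh).mul ((measurable_const.mul hφ).exp)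
  have hmeas2 : ∀ t : ℝ, Measurable (fun z => (φ z) ^ 2 * h z * Real.exp (t * φ z)) := fun t =>
    ((hφ.pow_const 2).mul hh).mul ((measurable_const.mul hφ).exp)
  -- the dominating function
  have hBint : Integrable
      (fun z => h z * Real.exp (c * φ z) + h z * Real.exp (d * φ z)) μ :=
    (hint c hc).add (hint d hd)
  -- endpoint estimate valid on the ball
  have hball : ∀ t ∈ Metric.ball lam δ, c ≤ t - δ ∧ t + δ ≤ d := by
    intro t ht
    rw [Metric.mem_ball, Real.dist_eq, abs_lt] at ht
    constructor <;> [simp only [hcdef]; simp only [hddef]] <;> linarith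
  have hexp_le : ∀ t ∈ Metric.ball lam δ, ∀ x : ℝ,
      Real.exp ((t + δ) * x) + Real.exp ((t - δ) * x)
        ≤ 2 * (Real.exp (c * x) + Real.exp (d * x)) := by
    intro t ht x
    obtain ⟨h1, h2⟩ := hball t ht
    have e1 := aux_exp_endpoints (c := c) (d := d) (s := t + δ) (x := x)
      (by linarith) h2
    have e2 := aux_exp_endpoints (c := c) (d := d) (s := t - δ) (x := x)
      h1 (by linarith)
    linarith
  -- Step 1 : derivative of Z
  have step1 := hasDerivAt_integral_of_dominated_loc_of_deriv_le (μ := μ)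
    (F := fun t z => h z * Real.exp (t * φ z))
    (F' := fun t z => φ z * h z * Real.exp (t * φ z))
    (x₀ := lam)
    (bound := fun z => (2 / δ) * (h z * Real.exp (c * φ z) + h z * Real.exp (d * φ z)))
    (Metric.ball_mem_nhds lam hδ)
    (Filter.Eventually.of_forall fun t => (hmeas t).aestronglyMeasurable)
    (hint lam ⟨ha, hb⟩)
    ((hmeas1 lam).aestronglyMeasurable)
    (Filter.Eventually.of_forall fun z => by
      intro t ht
      have h1 : |φ z| * Real.exp (t * φ z)
          ≤ δ⁻¹ * (Real.exp ((t + δ) * φ z) + Real.exp ((t - δ) * φ z)) :=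
        aux_abs_mul_exp hδ t (φ z)
      have h2 := hexp_le t ht (φ z)
      have habs : ‖φ z * h z * Real.exp (t * φ z)‖
          = h z * (|φ z| * Real.exp (t * φ z)) := by
        rw [Real.norm_eq_abs, abs_mul, abs_mul, abs_of_nonneg (hpos z),
          abs_of_pos (Real.exp_pos _)]; ring
      rw [habs]
      calc h z * (|φ z| * Real.exp (t * φ z))
          ≤ h z * (δ⁻¹ * (Real.exp ((t + δ) * φ z) + Real.exp ((t - δ) * φ z))) :=
            mul_le_mul_of_nonneg_left h1 (hpos z)
        _ ≤ h z * (δ⁻¹ * (2 * (Real.exp (c * φ z) + Real.exp (d * φ z)))) := by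
            have hδi : (0:ℝ) ≤ δ⁻¹ := by positivity
            exact mul_le_mul_of_nonneg_left
              (mul_le_mul_of_nonneg_left h2 hδi) (hpos z)
        _ = 2 / δ * (h z * Real.exp (c * φ z) + h z * Real.exp (d * φ z)) := by
            field_simp)
    (hBint.const_mul _)
    (Filter.Eventually.of_forall fun z => by
      intro t ht
      have hd1 : HasDerivAt (fun t : ℝ => t * φ z) (φ z) t := by
        simpa using (hasDerivAt_id t).mul_const (φ z)
      have hd2 := (hd1.exp).const_mul (h z)
      exact hd2.congr_deriv (by ring))
  -- Step 2 : derivative of N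
  have step2 := hasDerivAt_integral_of_dominated_loc_of_deriv_le (μ := μ)
    (F := fun t z => φ z * h z * Real.exp (t * φ z))
    (F' := fun t z => (φ z) ^ 2 * h z * Real.exp (t * φ z))
    (x₀ := lam)
    (bound := fun z => (8 / δ ^ 2) * (h z * Real.exp (c * φ z) + h z * Real.exp (d * φ z)))
    (Metric.ball_mem_nhds lam hδ)
    (Filter.Eventually.of_forall fun t => (hmeas1 t).aestronglyMeasurable)
    step1.1
    ((hmeas2 lam).aestronglyMeasurable)
    (Filter.Eventually.of_forall fun z => by
      intro t ht
      have h1 : (φ z) ^ 2 * Real.exp (t * φ z)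
          ≤ (4 / δ ^ 2) * (Real.exp ((t + δ) * φ z) + Real.exp ((t - δ) * φ z)) :=
        aux_sq_mul_exp hδ t (φ z)
      have h2 := hexp_le t ht (φ z)
      have habs : ‖(φ z) ^ 2 * h z * Real.exp (t * φ z)‖
          = h z * ((φ z) ^ 2 * Real.exp (t * φ z)) := by
        rw [Real.norm_eq_abs, abs_mul, abs_mul, abs_of_nonneg (hpos z),
          abs_of_pos (Real.exp_pos _), abs_of_nonneg (sq_nonneg _)]; ring
      rw [habs]
      calc h z * ((φ z) ^ 2 * Real.exp (t * φ z))
          ≤ h z * ((4 / δ ^ 2) * (Real.exp ((t + δ) * φ z) + Real.exp ((t - δ) * φ z))) :=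
            mul_le_mul_of_nonneg_left h1 (hpos z)
        _ ≤ h z * ((4 / δ ^ 2) * (2 * (Real.exp (c * φ z) + Real.exp (d * φ z)))) := by
            have hδi : (0:ℝ) ≤ 4 / δ ^ 2 := by positivity
            exact mul_le_mul_of_nonneg_left
              (mul_le_mul_of_nonneg_left h2 hδi) (hpos z)
        _ = 8 / δ ^ 2 * (h z * Real.exp (c * φ z) + h z * Real.exp (d * φ z)) := by
            field_simp; ring)
    (hBint.const_mul _)
    (Filter.Eventually.of_forall fun z => by
      intro t ht
      have hd1 : HasDerivAt (fun t : ℝ => t * φ z) (φ z) t := by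
        simpa using (hasDerivAt_id t).mul_const (φ z)
      have hd2 := (hd1.exp).const_mul (φ z * h z)
      exact hd2.congr_deriv (by ring))
  -- Step 3 : quotient rule
  have hZd := step1.2
  have hNd := step2.2
  have hZne : (∫ z, h z * Real.exp (lam * φ z) ∂μ) ≠ 0 := (hZ lam ⟨ha, hb⟩).ne'
  have hdiv := hNd.div hZd hZne
  have hmfun : m = fun t => (∫ z, φ z * h z * Real.exp (t * φ z) ∂μ) /
      (∫ z, h z * Real.exp (t * φ z) ∂μ) := funext hm
  rw [hm lam, hmfun]
  refine hdiv.congr_deriv ?_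
  set Q := ∫ z, (φ z) ^ 2 * h z * Real.exp (lam * φ z) ∂μ
  set N := ∫ z, φ z * h z * Real.exp (lam * φ z) ∂μ
  set Z := ∫ z, h z * Real.exp (lam * φ z) ∂μ
  field_simp
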